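/- Let 0 ≤ α < √β < 1 and ε > 0, with weights ϱ_k = (1-α)ε⁻¹(α^{-k} + (1-α²/β)^{-1/2} β^{-k/2}) for k ∈ -ℕ₀, and let g : ℓ_ϱ → ℝ be defined by g(x) = ((1-α)Σ_{k∈-ℕ₀} α^{-k} x_k) / (ε + √((1-β)Σ_{k∈-ℕ₀} β^{-k} x_k²)) (with g(x) = 0 if the denominator is infinite). Then g is Lipschitz continuous with Lipschitz constant 1 with respect to the norm ‖x‖_{ℓ_ϱ} = Σ_{k∈-ℕ₀} ϱ_k |x_k|. -/

import Mathlib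

open scoped ENNReal

/-- The map `g` from the Adam sequence space to `ℝ` (scalar case, index `k : ℕ`
corresponding to the nonpositive integer `-k`). If the denominator series diverges,
`g` is defined to be `0`. -/
noncomputable def adamG (α β ε : ℝ) (x : ℕ → ℝ) : ℝ :=
  if (∑' k : ℕ, ENNReal.ofReal ((1 - β) * β ^ k * (x k) ^ 2)) = ∞ then 0
  else ((1 - α) * ∑' k : ℕ, α ^ k * x k) /
    (ε + Real.sqrt (∑' k : ℕ, ENNReal.ofReal ((1 - β) * β ^ k * (x k) ^ 2)).toReal)

/-! Write `g x = N x / (ε + √(1 - β) * ‖u x‖₂)` with `N x = (1 - α) ∑ α^k x_k` and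
`u x = (√β^k x_k)_k`. For `s, n ≥ 0` the map `(N, n) ↦ N / (ε + s n)` moves by at most
`(|ΔN| + L |Δn|) / ε` as soon as `|N| ≤ L n` at one endpoint, and Cauchy–Schwarz against the
geometric sequence `(α / √β)^k` gives this with `L = (1 - α) (1 - α² / β)^(-1/2)`.
Since `|ΔN| ≤ (1 - α) ∑ α^k |x_k - y_k|` and `|Δn| ≤ ‖Δu‖₂ ≤ ‖Δu‖₁ = ∑ √β^k |x_k - y_k|`,
the two contributions add up to exactly `∑ ϱ_k |x_k - y_k|`. -/

section SquareSummable

variable {ι : Type*} {f g : ι → ℝ}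

theorem memℓp_two_of_summable_sq (hf : Summable fun i => f i ^ 2) : Memℓp f 2 :=
  memℓp_gen <| by simpa using hf

theorem lp.norm_mk_two (hf : Summable fun i => f i ^ 2) :
    ‖(⟨f, memℓp_two_of_summable_sq hf⟩ : lp (fun _ : ι => ℝ) 2)‖ = √(∑' i, f i ^ 2) := by
  rw [lp.norm_eq_tsum_rpow (by norm_num), Real.sqrt_eq_rpow]
  simp

theorem abs_tsum_mul_le_sqrt_mul_sqrt (hf : Summable fun i => f i ^ 2)
    (hg : Summable fun i => g i ^ 2) :
    |∑' i, f i * g i| ≤ √(∑' i, f i ^ 2) * √(∑' i, g i ^ 2) := by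
  have := abs_real_inner_le_norm (⟨f, memℓp_two_of_summable_sq hf⟩ : lp (fun _ : ι => ℝ) 2)
    ⟨g, memℓp_two_of_summable_sq hg⟩
  rw [lp.norm_mk_two hf, lp.norm_mk_two hg, lp.inner_eq_tsum] at this
  simpa [mul_comm] using this

theorem summable_sq_sub (hf : Summable fun i => f i ^ 2) (hg : Summable fun i => g i ^ 2) :
    Summable fun i => (f i - g i) ^ 2 := by
  simpa using ((memℓp_two_of_summable_sq hf).sub (memℓp_two_of_summable_sq hg)).summable
    (by norm_num)

theorem abs_sqrt_tsum_sq_sub_le (hf : Summable fun i => f i ^ 2)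
    (hg : Summable fun i => g i ^ 2) :
    |√(∑' i, f i ^ 2) - √(∑' i, g i ^ 2)| ≤ √(∑' i, (f i - g i) ^ 2) := by
  have := abs_norm_sub_norm_le (⟨f, memℓp_two_of_summable_sq hf⟩ : lp (fun _ : ι => ℝ) 2)
    ⟨g, memℓp_two_of_summable_sq hg⟩
  have hsub : (⟨f, memℓp_two_of_summable_sq hf⟩ - ⟨g, memℓp_two_of_summable_sq hg⟩ :
      lp (fun _ : ι => ℝ) 2) = ⟨f - g, memℓp_two_of_summable_sq (summable_sq_sub hf hg)⟩ := rfl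
  rwa [lp.norm_mk_two hf, lp.norm_mk_two hg, hsub, lp.norm_mk_two (f := f - g)
    (summable_sq_sub hf hg)] at this

theorem summable_sq_of_summable_abs (hf : Summable fun i => |f i|) :
    Summable fun i => f i ^ 2 := by
  have h1 : Memℓp f 1 := memℓp_gen <| by simpa using hf
  simpa using (h1.of_exponent_ge (by norm_num : (1 : ℝ≥0∞) ≤ 2)).summable (by norm_num)

theorem sqrt_tsum_sq_le_tsum_abs (hf : Summable fun i => |f i|) :
    √(∑' i, f i ^ 2) ≤ ∑' i, |f i| := by
  have hterm (i : ι) : f i ^ 2 ≤ (∑' j, |f j|) * |f i| := by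
    rw [← sq_abs, sq]
    exact mul_le_mul_of_nonneg_right (hf.le_tsum i fun j _ => abs_nonneg _) (abs_nonneg _)
  refine Real.sqrt_le_iff.mpr ⟨tsum_nonneg fun i => abs_nonneg _, ?_⟩
  calc ∑' i, f i ^ 2 ≤ ∑' i, (∑' j, |f j|) * |f i| :=
        (summable_sq_of_summable_abs hf).tsum_le_tsum hterm (hf.mul_left _)
    _ = (∑' i, |f i|) ^ 2 := by rw [tsum_mul_left, sq]

end SquareSummable

theorem abs_div_add_mul_sub_div_add_mul_le {ε s n n' N N' L : ℝ} (hε : 0 < ε) (hs : 0 ≤ s)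
    (hn : 0 ≤ n) (hn' : 0 ≤ n') (hL : 0 ≤ L) (hN' : |N'| ≤ L * n') :
    |N / (ε + s * n) - N' / (ε + s * n')| ≤ (|N - N'| + L * |n - n'|) / ε := by
  have hD : 0 < ε + s * n := by positivity
  have hD' : 0 < ε + s * n' := by positivity
  have hsplit : N / (ε + s * n) - N' / (ε + s * n')
      = (N - N') / (ε + s * n) + N' * (s * (n' - n)) / ((ε + s * n) * (ε + s * n')) := by
    field_simp
    ring
  have hfirst : |(N - N') / (ε + s * n)| ≤ |N - N'| / ε := by
    rw [abs_div, abs_of_pos hD]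
    exact div_le_div_of_nonneg_left (abs_nonneg _) hε (by nlinarith)
  have hsecond : |N' * (s * (n' - n)) / ((ε + s * n) * (ε + s * n'))| ≤ L * |n - n'| / ε := by
    rw [abs_div, abs_of_pos (mul_pos hD hD'), abs_mul, abs_mul, abs_of_nonneg hs, abs_sub_comm,
      div_le_div_iff₀ (mul_pos hD hD') hε]
    calc |N'| * (s * |n - n'|) * ε ≤ (L * n') * (s * |n - n'|) * ε := by gcongr
      _ = L * |n - n'| * (ε * (s * n')) := by ring
      _ ≤ L * |n - n'| * ((ε + s * n) * (ε + s * n')) := by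
        gcongr
        · exact le_add_of_nonneg_right (by positivity)
        · exact le_add_of_nonneg_left hε.le
  rw [hsplit, add_div]
  exact (abs_add_le _ _).trans (add_le_add hfirst hsecond)

section Weighted

variable {ι : Type*} {w x y : ι → ℝ}

theorem summable_mul_abs_of_const_mul_add {c r : ℝ} {p q : ι → ℝ} (hc : 0 < c) (hr : 0 < r)
    (hp : ∀ i, 0 ≤ p i) (hq : ∀ i, 0 ≤ q i)
    (h : Summable fun i => c * (p i + r * q i) * |x i|) :
    (Summable fun i => p i * |x i|) ∧ Summable fun i => q i * |x i| := by
  constructor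
  · refine Summable.of_nonneg_of_le (fun i => mul_nonneg (hp i) (abs_nonneg _))
      (fun i => ?_) (h.mul_left c⁻¹)
    have hsplit : c⁻¹ * (c * (p i + r * q i) * |x i|) = p i * |x i| + r * q i * |x i| := by
      field_simp
    have := mul_nonneg (mul_nonneg hr.le (hq i)) (abs_nonneg (x i))
    linarith
  · refine Summable.of_nonneg_of_le (fun i => mul_nonneg (hq i) (abs_nonneg _))
      (fun i => ?_) (h.mul_left (c * r)⁻¹)
    have hsplit : (c * r)⁻¹ * (c * (p i + r * q i) * |x i|)
        = r⁻¹ * p i * |x i| + q i * |x i| := by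
      field_simp
    have := mul_nonneg (mul_nonneg (inv_nonneg.mpr hr.le) (hp i)) (abs_nonneg (x i))
    linarith

theorem summable_mul_abs_sub (hw : ∀ i, 0 ≤ w i) (hx : Summable fun i => w i * |x i|)
    (hy : Summable fun i => w i * |y i|) : Summable fun i => w i * |x i - y i| :=
  Summable.of_nonneg_of_le (fun i => mul_nonneg (hw i) (abs_nonneg _))
    (fun i => by rw [← mul_add]; exact mul_le_mul_of_nonneg_left (abs_sub _ _) (hw i)) (hx.add hy)

theorem abs_tsum_mul_sub_tsum_mul_le (hw : ∀ i, 0 ≤ w i) (hx : Summable fun i => w i * |x i|)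
    (hy : Summable fun i => w i * |y i|) :
    |∑' i, w i * x i - ∑' i, w i * y i| ≤ ∑' i, w i * |x i - y i| := by
  have habs (i : ι) (z : ℝ) : |w i * z| = w i * |z| := by
    rw [abs_mul, abs_of_nonneg (hw i)]
  have hsx : Summable fun i => w i * x i := .of_abs (by simpa only [habs] using hx)
  have hsy : Summable fun i => w i * y i := .of_abs (by simpa only [habs] using hy)
  rw [← hsx.tsum_sub hsy]
  simp_rw [← mul_sub]
  have hs : Summable fun i => ‖w i * (x i - y i)‖ := by
    simpa only [Real.norm_eq_abs, habs] using summable_mul_abs_sub hw hx hy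
  simpa only [Real.norm_eq_abs, habs] using norm_tsum_le_tsum_norm hs

theorem summable_mul_sq_of_summable_mul_abs (hw : ∀ i, 0 ≤ w i)
    (hx : Summable fun i => w i * |x i|) : Summable fun i => (w i * x i) ^ 2 :=
  summable_sq_of_summable_abs <| by simpa only [abs_mul, abs_of_nonneg (hw _)] using hx

theorem abs_sqrt_tsum_mul_sq_sub_le (hw : ∀ i, 0 ≤ w i) (hx : Summable fun i => w i * |x i|)
    (hy : Summable fun i => w i * |y i|) :
    |√(∑' i, (w i * x i) ^ 2) - √(∑' i, (w i * y i) ^ 2)| ≤ ∑' i, w i * |x i - y i| := by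
  have habs (i : ι) : |w i * x i - w i * y i| = w i * |x i - y i| := by
    rw [← mul_sub, abs_mul, abs_of_nonneg (hw i)]
  calc _ ≤ √(∑' i, (w i * x i - w i * y i) ^ 2) :=
        abs_sqrt_tsum_sq_sub_le (summable_mul_sq_of_summable_mul_abs hw hx)
          (summable_mul_sq_of_summable_mul_abs hw hy)
    _ ≤ ∑' i, |w i * x i - w i * y i| :=
        sqrt_tsum_sq_le_tsum_abs (by simpa only [habs] using summable_mul_abs_sub hw hx hy)
    _ = ∑' i, w i * |x i - y i| := by simp only [habs]

end Weighted

theorem abs_tsum_pow_mul_le {a b : ℝ} (hab : |a| < b) {y : ℕ → ℝ}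
    (hy : Summable fun k => (b ^ k * y k) ^ 2) :
    |∑' k, a ^ k * y k| ≤ 1 / √(1 - a ^ 2 / b ^ 2) * √(∑' k, (b ^ k * y k) ^ 2) := by
  have hb : 0 < b := (abs_nonneg a).trans_lt hab
  have hratio : (a / b) ^ 2 < 1 := by
    rw [div_pow, div_lt_one (by positivity), sq_lt_sq, abs_of_pos hb]
    exact hab
  have hgeom : HasSum (fun k => ((a / b) ^ k) ^ 2) (1 - a ^ 2 / b ^ 2)⁻¹ := by
    simp_rw [← pow_mul, mul_comm _ 2, pow_mul, ← div_pow]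
    exact hasSum_geometric_of_lt_one (sq_nonneg _) hratio
  calc |∑' k, a ^ k * y k| = |∑' k, (a / b) ^ k * (b ^ k * y k)| := by
        simp_rw [div_pow, ← mul_assoc, div_mul_cancel₀ _ (pow_ne_zero _ hb.ne')]
    _ ≤ √(∑' k, ((a / b) ^ k) ^ 2) * √(∑' k, (b ^ k * y k) ^ 2) :=
        abs_tsum_mul_le_sqrt_mul_sqrt hgeom.summable hy
    _ = 1 / √(1 - a ^ 2 / b ^ 2) * √(∑' k, (b ^ k * y k) ^ 2) := by
        rw [hgeom.tsum_eq, Real.sqrt_inv, one_div]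

theorem adamG_eq {α β ε : ℝ} (hβ₀ : 0 ≤ β) (hβ₁ : β ≤ 1) {x : ℕ → ℝ}
    (hx : Summable fun k => (√β ^ k * x k) ^ 2) :
    adamG α β ε x
      = ((1 - α) * ∑' k, α ^ k * x k) / (ε + √(1 - β) * √(∑' k, (√β ^ k * x k) ^ 2)) := by
  have hterm (k : ℕ) : (1 - β) * β ^ k * x k ^ 2 = (1 - β) * (√β ^ k * x k) ^ 2 := by
    rw [mul_pow, ← pow_mul, mul_comm k, pow_mul, Real.sq_sqrt hβ₀, mul_assoc]
  have hnonneg (k : ℕ) : 0 ≤ (1 - β) * (√β ^ k * x k) ^ 2 :=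
    mul_nonneg (sub_nonneg.mpr hβ₁) (sq_nonneg _)
  simp_rw [adamG, hterm, ← ENNReal.ofReal_tsum_of_nonneg hnonneg (hx.mul_left _),
    if_neg ENNReal.ofReal_ne_top, ENNReal.toReal_ofReal (tsum_nonneg hnonneg), tsum_mul_left,
    Real.sqrt_mul (sub_nonneg.mpr hβ₁)]

theorem adamG_sub_le {α β ε : ℝ} (hα : 0 ≤ α) (hαβ : α < √β) (hβ : β ≤ 1) (hε : 0 < ε)
    {x y : ℕ → ℝ} (hxα : Summable fun k => α ^ k * |x k|)
    (hxβ : Summable fun k => √β ^ k * |x k|) (hyα : Summable fun k => α ^ k * |y k|)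
    (hyβ : Summable fun k => √β ^ k * |y k|) :
    |adamG α β ε x - adamG α β ε y|
      ≤ (1 - α) * (∑' k, α ^ k * |x k - y k|
          + 1 / √(1 - α ^ 2 / β) * ∑' k, √β ^ k * |x k - y k|) / ε := by
  have hβ₀ : 0 ≤ β := Real.sqrt_pos.mp (hα.trans_lt hαβ) |>.le
  have hα₁ : 0 ≤ 1 - α := by linarith [Real.sqrt_le_one.mpr hβ]
  have hpα (k : ℕ) : 0 ≤ α ^ k := pow_nonneg hα k
  have hpβ (k : ℕ) : 0 ≤ √β ^ k := pow_nonneg (Real.sqrt_nonneg β) k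
  have hux := summable_mul_sq_of_summable_mul_abs hpβ hxβ
  have huy := summable_mul_sq_of_summable_mul_abs hpβ hyβ
  rw [adamG_eq hβ₀ hβ hux, adamG_eq hβ₀ hβ huy]
  refine (abs_div_add_mul_sub_div_add_mul_le hε (Real.sqrt_nonneg _) (Real.sqrt_nonneg _)
    (Real.sqrt_nonneg _) (L := (1 - α) * (1 / √(1 - α ^ 2 / β))) (by positivity) ?_).trans ?_
  · have := abs_tsum_pow_mul_le (by rwa [abs_of_nonneg hα]) huy
    rw [Real.sq_sqrt hβ₀] at this
    rw [abs_mul, abs_of_nonneg hα₁, mul_assoc]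
    gcongr
  · rw [← mul_sub, abs_mul, abs_of_nonneg hα₁, mul_assoc, ← mul_add]
    gcongr
    · exact abs_tsum_mul_sub_tsum_mul_le hpα hxα hyα
    · exact abs_sqrt_tsum_mul_sq_sub_le hpβ hxβ hyβ

/-- `g` is Lipschitz with constant `1` w.r.t. the weighted `ℓ¹`-norm
`‖x‖_{ℓ_ϱ} = Σ_k ϱ_k |x_k|`. -/
theorem stmt2_g_lipschitz (α β ε : ℝ) (hα : 0 ≤ α) (hαβ : α < Real.sqrt β)
    (hβ : Real.sqrt β < 1) (hε : 0 < ε)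
    (ϱ : ℕ → ℝ)
    (hϱ : ∀ k : ℕ, ϱ k = (1 - α) * ε⁻¹ * (α ^ k + (1 / Real.sqrt (1 - α ^ 2 / β)) * (Real.sqrt β) ^ k))
    (x y : ℕ → ℝ) (hx : Summable fun k => ϱ k * |x k|)
    (hy : Summable fun k => ϱ k * |y k|) :
    |adamG α β ε x - adamG α β ε y| ≤ ∑' k : ℕ, ϱ k * |x k - y k| := by
  have hβ₀ : 0 < β := Real.sqrt_pos.mp (hα.trans_lt hαβ)
  have hβ₁ : β ≤ 1 := by simpa using ((Real.sqrt_lt' one_pos).mp hβ).le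
  have hc : 0 < (1 - α) * ε⁻¹ := mul_pos (by linarith) (inv_pos.mpr hε)
  have hr : 0 < 1 / √(1 - α ^ 2 / β) := by
    have : α ^ 2 / β < 1 := (div_lt_one hβ₀).mpr ((Real.lt_sqrt hα).mp hαβ)
    exact one_div_pos.mpr (Real.sqrt_pos.mpr (by linarith))
  have hpα (k : ℕ) : 0 ≤ α ^ k := pow_nonneg hα k
  have hpβ (k : ℕ) : 0 ≤ √β ^ k := pow_nonneg (Real.sqrt_nonneg β) k
  obtain rfl : ϱ = fun k => (1 - α) * ε⁻¹ * (α ^ k + 1 / √(1 - α ^ 2 / β) * √β ^ k) :=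
    funext hϱ
  obtain ⟨hxα, hxβ⟩ := summable_mul_abs_of_const_mul_add hc hr hpα hpβ hx
  obtain ⟨hyα, hyβ⟩ := summable_mul_abs_of_const_mul_add hc hr hpα hpβ hy
  have hsplit (k : ℕ) : (1 - α) * ε⁻¹ * (α ^ k + 1 / √(1 - α ^ 2 / β) * √β ^ k) * |x k - y k|
      = (1 - α) * ε⁻¹
        * (α ^ k * |x k - y k| + 1 / √(1 - α ^ 2 / β) * (√β ^ k * |x k - y k|)) := by
    ring
  rw [tsum_congr hsplit, tsum_mul_left, (summable_mul_abs_sub hpα hxα hyα).tsum_add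
    ((summable_mul_abs_sub hpβ hxβ hyβ).mul_left _), tsum_mul_left, mul_right_comm,
    ← div_eq_mul_inv]
  exact adamG_sub_le hα hαβ hβ₁ hε hxα hxβ hyα hyβ
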